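/- Let A be a quasi-cocommutative topologically free K[[ℏ]]-bialgebra, i.e. (Δ − Δ^op)(A) ⊆ ℏ A⊗A. Then A₀ = A/ℏA equipped with the cobracket δ(x) := ((Δ − Δ^op)/ℏ mod ℏ) is a co-Poisson bialgebra: δ is antisymmetric, satisfies the co-Jacobi identity, the co-Leibniz compatibility (Δ⊗id)∘δ = ((123)+(213))∘(id⊗δ)∘Δ, and δ(ab) = δ(a)Δ(b) + Δ(a)δ(b). -/

import Mathlib

open TensorProduct

noncomputable section

variable (K : Type*) [Field K] [CharZero K]
variable (A : Type*) [Ring A] [Bialgebra (PowerSeries K) A]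

/-- The flip of `A ⊗ A`. -/
def tau : A ⊗[PowerSeries K] A →ₗ[PowerSeries K] A ⊗[PowerSeries K] A :=
  (TensorProduct.comm (PowerSeries K) A A).toLinearMap

/-- The permutation (213) of `A ⊗ A ⊗ A` (swap of the first two factors). -/
def s12 : A ⊗[PowerSeries K] (A ⊗[PowerSeries K] A) →ₗ[PowerSeries K]
    A ⊗[PowerSeries K] (A ⊗[PowerSeries K] A) :=
  (TensorProduct.assoc (PowerSeries K) A A A).toLinearMap ∘ₗ
    (TensorProduct.map (TensorProduct.comm (PowerSeries K) A A).toLinearMap LinearMap.id) ∘ₗ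
      (TensorProduct.assoc (PowerSeries K) A A A).symm.toLinearMap

/-- The swap of the last two factors of `A ⊗ A ⊗ A`. -/
def s23 : A ⊗[PowerSeries K] (A ⊗[PowerSeries K] A) →ₗ[PowerSeries K]
    A ⊗[PowerSeries K] (A ⊗[PowerSeries K] A) :=
  TensorProduct.map LinearMap.id (TensorProduct.comm (PowerSeries K) A A).toLinearMap

/-- `Δ ⊗ id`. -/
def D1 : A ⊗[PowerSeries K] A →ₗ[PowerSeries K] A ⊗[PowerSeries K] (A ⊗[PowerSeries K] A) :=
  (TensorProduct.assoc (PowerSeries K) A A A).toLinearMap ∘ₗ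
    TensorProduct.map Coalgebra.comul LinearMap.id

/-! Write `d := Δ - Δ^op`, so that `ℏ • δ = d`. Each co-Poisson axiom for `δ`, multiplied by
`ℏ` or `ℏ²`, becomes an identity for `d` that holds exactly in every bialgebra. For the derivation
property this is `d (a b) = d a Δ b + Δ a d b - d a d b`. For co-Jacobi and co-Leibniz,
coassociativity turns `(d ⊗ id) d a`, `(Δ ⊗ id) d a` and `(id ⊗ d) Δ a` into elements of the group
ring of `S₃` acting on `(id ⊗ Δ) Δ a`, and the identities become relations in that group ring.

Dividing back by `ℏ` needs `ℏ` to be regular on `A ⊗ A` and `A ⊗ A ⊗ A`: a module without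
`ℏ`-torsion over the discrete valuation ring `K⟦ℏ⟧` is torsion-free, hence flat, so tensoring with
it preserves injectivity of `ℏ • ·`. -/

theorem IsDiscreteValuationRing.isTorsionFree_of_isSMulRegular {R M : Type*} [CommRing R]
    [IsDomain R] [IsDiscreteValuationRing R] [AddCommGroup M] [Module R M] {ϖ : R}
    (hϖ : Irreducible ϖ) (h : IsSMulRegular M ϖ) : Module.IsTorsionFree R M where
  isSMulRegular r hr := by
    obtain ⟨n, u, rfl⟩ := IsDiscreteValuationRing.eq_unit_mul_pow_irreducible hr.ne_zero hϖ
    exact (u.isUnit.isSMulRegular M).mul (h.pow n)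

open scoped PowerSeries

section

variable {K A}

omit [CharZero K]

local notation "Δ" => (Coalgebra.comul : A →ₗ[K⟦X⟧] A ⊗[K⟦X⟧] A)

@[simp] lemma s12_tmul (x y z : A) : s12 K A (x ⊗ₜ (y ⊗ₜ z)) = y ⊗ₜ (x ⊗ₜ z) := rfl

@[simp] lemma s23_tmul (x y z : A) : s23 K A (x ⊗ₜ (y ⊗ₜ z)) = x ⊗ₜ (z ⊗ₜ y) := rfl

@[simp] lemma tau_tau (u : A ⊗[K⟦X⟧] A) : tau K A (tau K A u) = u :=
  TensorProduct.comm_comm _ _ _ u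

lemma assoc_comp_rTensor_tau :
    (TensorProduct.assoc K⟦X⟧ A A A).toLinearMap ∘ₗ (tau K A).rTensor A =
      s12 K A ∘ₗ (TensorProduct.assoc K⟦X⟧ A A A).toLinearMap := by
  ext x y z
  rfl

lemma assoc_comp_comm :
    (TensorProduct.assoc K⟦X⟧ A A A).toLinearMap ∘ₗ
        (TensorProduct.comm K⟦X⟧ A (A ⊗[K⟦X⟧] A)).toLinearMap =
      s23 K A * s12 K A := by
  ext x y z
  rfl

lemma comm_eq_s12_mul_s23_comp_assoc :
    (TensorProduct.comm K⟦X⟧ (A ⊗[K⟦X⟧] A) A).toLinearMap =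
      (s12 K A * s23 K A) ∘ₗ (TensorProduct.assoc K⟦X⟧ A A A).toLinearMap := by
  ext x y z
  rfl

lemma coJacobi_permutation_identity :
    (1 + s12 K A * s23 K A + s23 K A * s12 K A) * (1 - s12 K A) * (1 - s23 K A * s12 K A) =
      0 := by
  ext x y z
  simp only [AlgebraTensorModule.curry_apply, LinearMap.restrictScalars_self, curry_apply,
    Module.End.mul_apply, LinearMap.sub_apply, LinearMap.add_apply, Module.End.one_apply,
    LinearMap.zero_apply, s12_tmul, s23_tmul, map_sub]
  abel

lemma coLeibniz_permutation_identity :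
    (1 - s23 K A * s12 K A) - (1 + s12 K A) * (1 - s23 K A) +
      s12 K A * (1 - s23 K A) * (1 - s12 K A * s23 K A) = 0 := by
  ext x y z
  simp only [AlgebraTensorModule.curry_apply, LinearMap.restrictScalars_self, curry_apply,
    Module.End.mul_apply, LinearMap.sub_apply, LinearMap.add_apply, Module.End.one_apply,
    LinearMap.zero_apply, s12_tmul, s23_tmul, map_sub]
  abel

lemma D1_comp_comul : D1 K A ∘ₗ Δ = LinearMap.lTensor A Δ ∘ₗ Δ :=
  Coalgebra.coassoc

lemma D1_comp_tau : D1 K A ∘ₗ tau K A = (s23 K A * s12 K A) ∘ₗ LinearMap.lTensor A Δ := by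
  rw [D1, tau, LinearMap.comp_assoc, ← LinearMap.rTensor, LinearMap.rTensor_comp_comm,
    ← LinearMap.comp_assoc, assoc_comp_comm]

lemma lTensor_comul_comp_tau :
    LinearMap.lTensor A Δ ∘ₗ tau K A = (s12 K A * s23 K A) ∘ₗ D1 K A := by
  rw [D1, tau, LinearMap.lTensor_comp_comm, comm_eq_s12_mul_s23_comp_assoc, LinearMap.comp_assoc]
  rfl

variable (K A) in
def comulSubOp : A →ₗ[K⟦X⟧] A ⊗[K⟦X⟧] A := Δ - tau K A ∘ₗ Δ

lemma comulSubOp_add_tau (a : A) : comulSubOp K A a + tau K A (comulSubOp K A a) = 0 := by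
  simp [comulSubOp]

lemma assoc_comp_rTensor_comulSubOp :
    (TensorProduct.assoc K⟦X⟧ A A A).toLinearMap ∘ₗ (comulSubOp K A).rTensor A =
      (1 - s12 K A) ∘ₗ D1 K A := by
  rw [comulSubOp, LinearMap.rTensor_sub, LinearMap.rTensor_comp, LinearMap.comp_sub,
    ← LinearMap.comp_assoc, assoc_comp_rTensor_tau, LinearMap.sub_comp, LinearMap.comp_assoc]
  rfl

lemma lTensor_comulSubOp :
    (comulSubOp K A).lTensor A = (1 - s23 K A) ∘ₗ LinearMap.lTensor A Δ := by
  rw [comulSubOp, LinearMap.lTensor_sub, LinearMap.lTensor_comp, LinearMap.sub_comp]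
  rfl

lemma D1_comp_comulSubOp :
    D1 K A ∘ₗ comulSubOp K A = (1 - s23 K A * s12 K A) ∘ₗ LinearMap.lTensor A Δ ∘ₗ Δ := by
  rw [comulSubOp, LinearMap.comp_sub, D1_comp_comul, ← LinearMap.comp_assoc, D1_comp_tau,
    LinearMap.sub_comp, LinearMap.comp_assoc]
  rfl

lemma lTensor_comul_comp_comulSubOp :
    LinearMap.lTensor A Δ ∘ₗ comulSubOp K A =
      (1 - s12 K A * s23 K A) ∘ₗ LinearMap.lTensor A Δ ∘ₗ Δ := by
  rw [comulSubOp, LinearMap.comp_sub, ← LinearMap.comp_assoc, lTensor_comul_comp_tau,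
    LinearMap.comp_assoc, D1_comp_comul, LinearMap.sub_comp]
  rfl

def coJacobiator (f : A →ₗ[K⟦X⟧] A ⊗[K⟦X⟧] A) (a : A) : A ⊗[K⟦X⟧] (A ⊗[K⟦X⟧] A) :=
  (1 + s12 K A * s23 K A + s23 K A * s12 K A)
    (TensorProduct.assoc K⟦X⟧ A A A (f.rTensor A (f a)))

lemma coJacobiator_smul (r : K⟦X⟧) (f : A →ₗ[K⟦X⟧] A ⊗[K⟦X⟧] A) (a : A) :
    coJacobiator (r • f) a = (r * r) • coJacobiator f a := by
  simp [coJacobiator, LinearMap.rTensor_smul, mul_smul]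

lemma coJacobiator_comulSubOp (a : A) : coJacobiator (comulSubOp K A) a = 0 := by
  have hJ : TensorProduct.assoc K⟦X⟧ A A A ((comulSubOp K A).rTensor A (comulSubOp K A a)) =
      ((1 - s12 K A) * (1 - s23 K A * s12 K A)) (LinearMap.lTensor A Δ (Δ a)) := by
    rw [← LinearEquiv.coe_toLinearMap, ← LinearMap.comp_apply, assoc_comp_rTensor_comulSubOp,
      LinearMap.comp_apply, ← LinearMap.comp_apply (D1 K A), D1_comp_comulSubOp]
    rfl
  rw [coJacobiator, hJ, ← Module.End.mul_apply, ← mul_assoc, coJacobi_permutation_identity,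
    LinearMap.zero_apply]

lemma coLeibniz_comulSubOp (a : A) :
    D1 K A (comulSubOp K A a) - ((comulSubOp K A).lTensor A (Δ a) +
      s12 K A ((comulSubOp K A).lTensor A (Δ a))) =
      -s12 K A ((comulSubOp K A).lTensor A (comulSubOp K A a)) := by
  have h1 := LinearMap.congr_fun (D1_comp_comulSubOp (K := K) (A := A)) a
  have h2 := LinearMap.congr_fun (lTensor_comulSubOp (K := K) (A := A))
  have h3 := LinearMap.congr_fun (lTensor_comul_comp_comulSubOp (K := K) (A := A)) a
  rw [eq_neg_iff_add_eq_zero]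
  calc _ = ((1 - s23 K A * s12 K A) - (1 + s12 K A) * (1 - s23 K A) +
        s12 K A * (1 - s23 K A) * (1 - s12 K A * s23 K A)) (LinearMap.lTensor A Δ (Δ a)) := by
        simp only [LinearMap.comp_apply] at h1 h2 h3
        rw [h1, h2, h2, h3]
        simp only [Module.End.mul_apply, LinearMap.sub_apply, LinearMap.add_apply,
          Module.End.one_apply, map_sub]
        abel
    _ = 0 := by rw [coLeibniz_permutation_identity, LinearMap.zero_apply]

lemma comulSubOp_mul (a b : A) :
    comulSubOp K A (a * b) - (comulSubOp K A a * Δ b + Δ a * comulSubOp K A b) =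
      -(comulSubOp K A a * comulSubOp K A b) := by
  have htau (u v : A ⊗[K⟦X⟧] A) : tau K A (u * v) = tau K A u * tau K A v :=
    map_mul (Algebra.TensorProduct.comm K⟦X⟧ A A) u v
  simp only [comulSubOp, LinearMap.sub_apply, LinearMap.comp_apply, Bialgebra.comul_mul, htau]
  noncomm_ring

end

theorem stmt7
    (htf : ∀ a : A, (PowerSeries.X : PowerSeries K) • a = 0 → a = 0)
    (δ : A →ₗ[PowerSeries K] A ⊗[PowerSeries K] A)
    (hδ : ∀ a : A, (PowerSeries.X : PowerSeries K) • δ a =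
      Coalgebra.comul a - tau K A (Coalgebra.comul a)) :
    -- antisymmetry mod ℏ
    (∀ a : A, ∃ z, δ a + tau K A (δ a) = (PowerSeries.X : PowerSeries K) • z) ∧
    -- co-Jacobi mod ℏ : ((123)+(231)+(312)) ∘ (δ⊗id) ∘ δ = 0
    (∀ a : A, ∃ z,
      (((TensorProduct.assoc (PowerSeries K) A A A).toLinearMap ∘ₗ
          TensorProduct.map δ LinearMap.id) (δ a)) +
        (s12 K A) ((s23 K A) (((TensorProduct.assoc (PowerSeries K) A A A).toLinearMap ∘ₗ
          TensorProduct.map δ LinearMap.id) (δ a))) +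
        (s23 K A) ((s12 K A) (((TensorProduct.assoc (PowerSeries K) A A A).toLinearMap ∘ₗ
          TensorProduct.map δ LinearMap.id) (δ a))) = (PowerSeries.X : PowerSeries K) • z) ∧
    -- compatibility (Δ⊗id)∘δ = ((123)+(213))∘(id⊗δ)∘Δ mod ℏ
    (∀ a : A, ∃ z,
      D1 K A (δ a) -
        ((TensorProduct.map LinearMap.id δ) (Coalgebra.comul a) +
          (s12 K A) ((TensorProduct.map LinearMap.id δ) (Coalgebra.comul a))) =
        (PowerSeries.X : PowerSeries K) • z) ∧
    -- derivation property mod ℏ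
    (∀ a b : A, ∃ z,
      δ (a * b) - (δ a * Coalgebra.comul b + Coalgebra.comul a * δ b) =
        (PowerSeries.X : PowerSeries K) • z) := by
  have hregA : IsSMulRegular A (PowerSeries.X : K⟦X⟧) := .of_right_eq_zero_of_smul htf
  have : Module.IsTorsionFree K⟦X⟧ A :=
    IsDiscreteValuationRing.isTorsionFree_of_isSMulRegular PowerSeries.X_irreducible hregA
  have hreg₂ : IsSMulRegular (A ⊗[K⟦X⟧] A) (PowerSeries.X : K⟦X⟧) := hregA.lTensor A
  have hreg₃ : IsSMulRegular (A ⊗[K⟦X⟧] (A ⊗[K⟦X⟧] A)) (PowerSeries.X : K⟦X⟧) :=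
    hreg₂.lTensor A
  have hd : (PowerSeries.X : K⟦X⟧) • δ = comulSubOp K A := LinearMap.ext hδ
  refine ⟨fun a => ⟨0, hreg₂ ?_⟩, fun a => ⟨0, (hreg₃.mul hreg₃) ?_⟩,
    fun a => ⟨-s12 K A (δ.lTensor A (δ a)), hreg₃ ?_⟩, fun a b => ⟨-(δ a * δ b), hreg₂ ?_⟩⟩
  · have := comulSubOp_add_tau (K := K) a
    rw [← hd] at this
    simpa only [smul_add, smul_zero, LinearMap.smul_apply, map_smul] using this
  · show _ • coJacobiator δ a = _
    rw [← coJacobiator_smul, hd, coJacobiator_comulSubOp]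
    exact (smul_zero _).symm
  · have := coLeibniz_comulSubOp (K := K) a
    rw [← hd] at this
    simp only [LinearMap.lTensor_smul, LinearMap.smul_apply, map_smul, smul_sub, smul_add,
      smul_neg] at this ⊢
    exact this
  · have := comulSubOp_mul (K := K) a b
    rw [← hd] at this
    simpa only [smul_sub, smul_add, smul_neg, LinearMap.smul_apply, smul_mul_assoc,
      mul_smul_comm] using this
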